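/- arXiv:1010.1049 — 3 statements merged into one kernel-verified Lean document; each statement's English description precedes it below -/
import Mathlib

section
/- Let μ₁, μ₂ ∈ ℝ and σ₁², σ₂² > 0. Then 2 - 2·exp(-(μ₁-μ₂)²/(4(σ₁²+σ₂²)))·√(2√(σ₁²σ₂²)/(σ₁²+σ₂²)) ≤ 2(log(σ₁²/σ₂²))² + (μ₁-μ₂)²/(2(σ₁²+σ₂²)). -/
/-!
Write `σ₁² = x²`, `σ₂² = y²` and `t = (μ₁ - μ₂)² / (4(σ₁² + σ₂²))`, so that the Bhattacharyya
coefficient is `exp (-t) * S` with `S = √(2xy / (x² + y²)) ≤ 1`. From `exp (-t) ≥ 1 - t` the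
left-hand side is at most `2(1 - S) + 2t`, and `1 - S ≤ 1 - S² = (x - y)² / (x² + y²)`, which is
at most `log (x / y)² = log (σ₁² / σ₂²)² / 4` because `|log u| ≥ |u - 1| / max u 1`.
-/

open Real

lemma sq_sub_one_le_sq_log_mul {u : ℝ} (hu : 0 < u) : (u - 1) ^ 2 ≤ log u ^ 2 * (u ^ 2 + 1) := by
  rcases le_or_gt 1 u with h | h
  · have hlog : u - 1 ≤ log u * u := by
      have := one_sub_inv_le_log_of_pos hu
      rwa [← div_le_iff₀ hu, sub_div, div_self hu.ne', one_div]
    have := mul_le_mul hlog hlog (by linarith) (mul_nonneg (log_nonneg h) hu.le)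
    nlinarith [sq_nonneg (log u)]
  · have hlog : log u ≤ u - 1 := log_le_sub_one_of_pos hu
    have := mul_le_mul_of_nonpos_left hlog (by linarith : u - 1 ≤ 0)
    nlinarith [mul_nonneg (sq_nonneg (log u)) (sq_nonneg u), log_neg hu h]

lemma sq_sub_le_sq_log_div_mul {x y : ℝ} (hx : 0 < x) (hy : 0 < y) :
    (x - y) ^ 2 ≤ log (x / y) ^ 2 * (x ^ 2 + y ^ 2) := by
  have h := mul_le_mul_of_nonneg_left (sq_sub_one_le_sq_log_mul (div_pos hx hy)) (sq_nonneg y)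
  have hscale : y ^ 2 * ((x / y) ^ 2 + 1) = x ^ 2 + y ^ 2 := by field_simp
  rwa [mul_left_comm, hscale, ← mul_pow, mul_sub, mul_div_cancel₀ x hy.ne', mul_one] at h

lemma sqrt_two_mul_div_add_sq_le_one (x y : ℝ) : √(2 * x * y / (x ^ 2 + y ^ 2)) ≤ 1 :=
  sqrt_le_one.mpr (div_le_one_of_le₀ (two_mul_le_add_sq x y) (by positivity))

lemma one_sub_sqrt_two_mul_div_add_sq_le_sq_log {x y : ℝ} (hx : 0 < x) (hy : 0 < y) :
    1 - √(2 * x * y / (x ^ 2 + y ^ 2)) ≤ log (x / y) ^ 2 := by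
  set S := √(2 * x * y / (x ^ 2 + y ^ 2)) with hS
  have hS0 : 0 ≤ S := sqrt_nonneg _
  have hS1 : S ≤ 1 := sqrt_two_mul_div_add_sq_le_one x y
  have hxy : 0 < x ^ 2 + y ^ 2 := by positivity
  calc 1 - S ≤ 1 - S ^ 2 := by nlinarith
    _ = (x - y) ^ 2 / (x ^ 2 + y ^ 2) := by
      rw [hS, sq_sqrt (by positivity)]
      field_simp
      ring
    _ ≤ log (x / y) ^ 2 := div_le_of_le_mul₀ hxy.le (sq_nonneg _) (sq_sub_le_sq_log_div_mul hx hy)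

lemma one_sub_exp_neg_mul_le {t S : ℝ} (ht : 0 ≤ t) (hS0 : 0 ≤ S) (hS1 : S ≤ 1) :
    1 - exp (-t) * S ≤ (1 - S) + t := by
  have hexp : 1 - t ≤ exp (-t) := by linarith [add_one_le_exp (-t)]
  nlinarith [mul_le_mul_of_nonneg_right hexp hS0]

theorem hellinger_normal_bound (μ₁ μ₂ σ₁sq σ₂sq : ℝ) (h₁ : 0 < σ₁sq) (h₂ : 0 < σ₂sq) :
    2 - 2 * Real.exp (-(μ₁ - μ₂) ^ 2 / (4 * (σ₁sq + σ₂sq)))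
          * Real.sqrt (2 * Real.sqrt (σ₁sq * σ₂sq) / (σ₁sq + σ₂sq))
      ≤ 2 * (Real.log (σ₁sq / σ₂sq)) ^ 2 + (μ₁ - μ₂) ^ 2 / (2 * (σ₁sq + σ₂sq)) := by
  obtain ⟨x, hx, rfl⟩ : ∃ x, 0 < x ∧ σ₁sq = x ^ 2 := ⟨√σ₁sq, sqrt_pos.2 h₁, (sq_sqrt h₁.le).symm⟩
  obtain ⟨y, hy, rfl⟩ : ∃ y, 0 < y ∧ σ₂sq = y ^ 2 := ⟨√σ₂sq, sqrt_pos.2 h₂, (sq_sqrt h₂.le).symm⟩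
  rw [← mul_pow, sqrt_sq (mul_pos hx hy).le, ← div_pow, log_pow, ← mul_assoc]
  set t := (μ₁ - μ₂) ^ 2 / (4 * (x ^ 2 + y ^ 2)) with ht
  have hneg : -(μ₁ - μ₂) ^ 2 / (4 * (x ^ 2 + y ^ 2)) = -t := by rw [ht, neg_div]
  have htwice : (μ₁ - μ₂) ^ 2 / (2 * (x ^ 2 + y ^ 2)) = 2 * t := by
    rw [ht]; field_simp; ring
  rw [hneg, htwice]
  have hbc := one_sub_exp_neg_mul_le (t := t) (by positivity) (sqrt_nonneg _)
    (sqrt_two_mul_div_add_sq_le_one x y)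
  have hlog := one_sub_sqrt_two_mul_div_add_sq_le_sq_log hx hy
  push_cast
  linarith [sq_nonneg (log (x / y))]
end

section
/- Let μ₁, μ₂ ∈ ℝ and σ₁² = e^{f₁}, σ₂² = e^{f₂} with |f₁| ≤ N and |f₂| ≤ N. Then (1/2) log(σ₂²/σ₁²) - (1/2)(1 - σ₁²/σ₂²) + (1/2)(μ₁-μ₂)²/σ₂² ≤ (1 + e^{2N})((μ₁-μ₂)² + (f₁-f₂)²). -/
/-!
With `t = f₁ - f₂` the left side equals `(exp t - 1 - t) / 2 + (μ₁ - μ₂)² exp (-f₂) / 2`.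
Convexity of `exp` gives `exp t - 1 - t ≤ t (exp t - 1) ≤ t² exp |t|`, and `|t| ≤ 2N`,
`-f₂ ≤ N` bound the two exponential factors by `exp (2N)` and `exp N ≤ 1 + exp (2N)`.
-/

open Real

lemma Real.exp_sub_one_sub_le_mul_exp_sub_one (t : ℝ) : exp t - 1 - t ≤ t * (exp t - 1) := by
  have h : 1 - t ≤ exp (-t) := by linarith [add_one_le_exp (-t)]
  have h' : exp t * (1 - t) ≤ 1 := by
    calc exp t * (1 - t) ≤ exp t * exp (-t) := by gcongr
      _ = 1 := by rw [← exp_add, add_neg_cancel, exp_zero]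
  linarith

lemma Real.mul_exp_sub_one_le_sq_mul_exp_abs (t : ℝ) : t * (exp t - 1) ≤ t ^ 2 * exp |t| := by
  rcases le_or_gt 0 t with ht | ht
  · have h := exp_sub_one_sub_le_mul_exp_sub_one t
    rw [abs_of_nonneg ht]
    nlinarith
  · have h := add_one_le_exp t
    have h₁ : 1 ≤ exp |t| := one_le_exp (abs_nonneg t)
    nlinarith [sq_nonneg t]

lemma Real.exp_sub_one_sub_le_sq_mul_exp_abs (t : ℝ) : exp t - 1 - t ≤ t ^ 2 * exp |t| :=
  (exp_sub_one_sub_le_mul_exp_sub_one t).trans (mul_exp_sub_one_le_sq_mul_exp_abs t)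

lemma Real.exp_le_one_add_exp_two_mul (N : ℝ) : exp N ≤ 1 + exp (2 * N) := by
  have h : exp (2 * N) = exp N ^ 2 := by rw [← exp_nat_mul]; norm_num
  nlinarith [sq_nonneg (exp N - 1)]

lemma kl_normal_log_param_eq (d f₁ f₂ : ℝ) :
    (1 / 2) * log (exp f₂ / exp f₁) - (1 / 2) * (1 - exp f₁ / exp f₂) + (1 / 2) * d ^ 2 / exp f₂
      = (1 / 2) * (exp (f₁ - f₂) - 1 - (f₁ - f₂)) + (1 / 2) * (d ^ 2 * exp (-f₂)) := by
  rw [← exp_sub, ← exp_sub, log_exp, exp_neg]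
  ring

theorem kl_normal_bound (N μ₁ μ₂ f₁ f₂ : ℝ) (hf₁ : |f₁| ≤ N) (hf₂ : |f₂| ≤ N) :
    (1 / 2) * Real.log (Real.exp f₂ / Real.exp f₁)
        - (1 / 2) * (1 - Real.exp f₁ / Real.exp f₂)
        + (1 / 2) * (μ₁ - μ₂) ^ 2 / Real.exp f₂
      ≤ (1 + Real.exp (2 * N)) * ((μ₁ - μ₂) ^ 2 + (f₁ - f₂) ^ 2) := by
  rw [kl_normal_log_param_eq]
  have hdiff : exp (f₁ - f₂) - 1 - (f₁ - f₂) ≤ (f₁ - f₂) ^ 2 * exp (2 * N) := by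
    have habs : |f₁ - f₂| ≤ 2 * N := by linarith [abs_sub f₁ f₂]
    calc _ ≤ (f₁ - f₂) ^ 2 * exp |f₁ - f₂| := exp_sub_one_sub_le_sq_mul_exp_abs _
      _ ≤ _ := by gcongr
  have hmean : (μ₁ - μ₂) ^ 2 * exp (-f₂) ≤ (μ₁ - μ₂) ^ 2 * (1 + exp (2 * N)) := by
    have hf₂' : -f₂ ≤ N := by linarith [neg_abs_le f₂]
    gcongr
    exact (exp_le_exp.mpr hf₂').trans (exp_le_one_add_exp_two_mul N)
  nlinarith [sq_nonneg (f₁ - f₂), sq_nonneg (μ₁ - μ₂), exp_pos (2 * N)]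
end

section
/- Let μ₁, μ₂ ∈ ℝ and σ₁² = e^{f₁}, σ₂² = e^{f₂} with |f₁| ≤ N and |f₂| ≤ N, where N ≥ 0. Then 2·(-1/2 + σ₁²/(2σ₂²))² + (σ₁²/σ₂² · (μ₁-μ₂))² ≤ e^{4N}·((f₁-f₂)² + C·(μ₁-μ₂)²) for C = e^{4N}. -/
/-!
Only the variance ratio `r = σ₁² / σ₂² = exp (f₁ - f₂)` enters the left side, which equals
`(r - 1)² / 2 + r² (μ₁ - μ₂)²`. Since `|f₁ - f₂| ≤ 2N`, the sandwich `x ≤ exp x - 1 ≤ x exp x`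
gives `(r - 1)² ≤ (f₁ - f₂)² exp (4N)`, and `r² ≤ exp (4N)`; finally `1 ≤ exp (4N)`.
-/

open Real

namespace Real

theorem exp_sub_one_le_mul_exp (x : ℝ) : exp x - 1 ≤ x * exp x := by
  have h := mul_le_mul_of_nonneg_right (one_sub_le_exp_neg x) (exp_pos x).le
  rw [exp_neg, inv_mul_cancel₀ (exp_pos x).ne'] at h
  linarith

theorem abs_exp_sub_one_le_abs_mul_exp_abs (x : ℝ) : |exp x - 1| ≤ |x| * exp |x| := by
  have hlower : x ≤ exp x - 1 := by linarith [add_one_le_exp x]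
  rcases le_total 0 x with hx | hx
  · rw [abs_of_nonneg hx, abs_of_nonneg (hx.trans hlower)]
    exact exp_sub_one_le_mul_exp x
  · rw [abs_of_nonpos hx, abs_of_nonpos (sub_nonpos.2 (exp_le_one_iff.2 hx))]
    nlinarith [one_le_exp (neg_nonneg.2 hx)]

theorem sq_exp_sub_one_le (x : ℝ) : (exp x - 1) ^ 2 ≤ x ^ 2 * exp (2 * |x|) :=
  calc (exp x - 1) ^ 2 = |exp x - 1| ^ 2 := (sq_abs _).symm
    _ ≤ (|x| * exp |x|) ^ 2 := by gcongr; exact abs_exp_sub_one_le_abs_mul_exp_abs x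
    _ = x ^ 2 * exp (2 * |x|) := by rw [mul_pow, sq_abs, ← exp_nat_mul]; norm_num

end Real

theorem var_normal_bound_general (N μ₁ μ₂ f₁ f₂ : ℝ) (hf₁ : |f₁| ≤ N) (hf₂ : |f₂| ≤ N) :
    2 * (-(1 / 2) + Real.exp f₁ / (2 * Real.exp f₂)) ^ 2
        + (Real.exp f₁ / Real.exp f₂ * (μ₁ - μ₂)) ^ 2
      ≤ Real.exp (4 * N) * ((f₁ - f₂) ^ 2 + Real.exp (4 * N) * (μ₁ - μ₂) ^ 2) := by
  have hdiff : |f₁ - f₂| ≤ 2 * N := by linarith [abs_sub f₁ f₂]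
  have hone : 1 ≤ exp (4 * N) := one_le_exp (by linarith [abs_nonneg f₁])
  have hratio : exp (f₁ - f₂) ^ 2 ≤ exp (4 * N) := by
    rw [← exp_nat_mul]
    exact exp_le_exp.2 (by push_cast; linarith [le_abs_self (f₁ - f₂)])
  have hvar : (exp (f₁ - f₂) - 1) ^ 2 ≤ (f₁ - f₂) ^ 2 * exp (4 * N) :=
    (sq_exp_sub_one_le _).trans (by gcongr _ * exp ?_; linarith)
  have hpos : 0 ≤ exp (4 * N) := (exp_pos _).le
  calc _ = (exp (f₁ - f₂) - 1) ^ 2 / 2 + exp (f₁ - f₂) ^ 2 * (μ₁ - μ₂) ^ 2 := by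
        rw [exp_sub]; field_simp; ring
    _ ≤ (f₁ - f₂) ^ 2 * exp (4 * N) / 2 + exp (4 * N) * (μ₁ - μ₂) ^ 2 := by gcongr
    _ ≤ _ := by
        nlinarith [mul_le_mul_of_nonneg_right hone (mul_nonneg hpos (sq_nonneg (μ₁ - μ₂))),
          mul_nonneg hpos (sq_nonneg (f₁ - f₂))]

theorem var_normal_bound (N μ₁ μ₂ f₁ f₂ : ℝ) (hN : 0 ≤ N) (hf₁ : |f₁| ≤ N) (hf₂ : |f₂| ≤ N) :
    2 * (-(1 / 2) + Real.exp f₁ / (2 * Real.exp f₂)) ^ 2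
        + (Real.exp f₁ / Real.exp f₂ * (μ₁ - μ₂)) ^ 2
      ≤ Real.exp (4 * N) * ((f₁ - f₂) ^ 2 + Real.exp (4 * N) * (μ₁ - μ₂) ^ 2) :=
  var_normal_bound_general N μ₁ μ₂ f₁ f₂ hf₁ hf₂
end
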